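/- Let G be a Monge DAG on {s,...,N} and let f(m,n) denote the minimum length of all m-link s-n paths, defined for n ∈ {s+1,...,N} and 1 ≤ m ≤ n-s. Then for all N ≥ n₁ ≥ n₂ > s, all 1 ≤ m₁ ≤ m₂ ≤ n₂ - s, and all m ∈ [m₁, m₂]: f(m₁,n₁) + f(m₂,n₂) ≥ f(m,n₁) + f(m₁+m₂-m, n₂). In particular, f is submodular on the lattice {(m,n) : n ∈ [s+1,N], m ∈ [1, n-s]}. -/

import Mathlib

/-!
Take shortest paths `u` (`m₁` links, ending at `n₁`) and `w` (`m₂` links, ending at `n₂`) and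
compare `u j` with `w (d + j)`, where `d = m - m₁`. At `j = 0` the vertex of `u` is the lower one;
at `j = m₁` it is the upper one unless `w (d + m₁) ≥ n₁`, which forces `m = m₂` and `n₁ = n₂`.
So the two paths cross at some link `j`, and swapping their tails there yields an `m`-link path to
`n₁` and an `(m₁ + m₂ - m)`-link path to `n₂`. The Monge inequality for the two swapped edges
bounds their total length by that of `u` and `w`.
-/

/-- A Monge (submodular) edge-length function on the complete DAG on `{s,...,N}`. -/
def IsMonge (s N : ℕ) (c : ℕ → ℕ → ℝ) : Prop :=
  ∀ i₁ i₂ j₂ j₁ : ℕ, s ≤ i₁ → i₁ < i₂ → i₂ < j₂ → j₂ < j₁ → j₁ ≤ N →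
    c i₁ j₂ + c i₂ j₁ ≤ c i₁ j₁ + c i₂ j₂

/-- `v 0, v 1, ..., v m` is an `m`-link path from `a` to `b` inside `{s,...,N}`. -/
def IsPath (s N a b m : ℕ) (v : ℕ → ℕ) : Prop :=
  v 0 = a ∧ v m = b ∧ (∀ k < m, v k < v (k + 1)) ∧ s ≤ a ∧ b ≤ N

/-- The length of the `m`-link path `v 0, ..., v m` under edge lengths `c`. -/
def pathLen (c : ℕ → ℕ → ℝ) (m : ℕ) (v : ℕ → ℕ) : ℝ :=
  ∑ k ∈ Finset.range m, c (v k) (v (k + 1))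

/-- The set of lengths of `m`-link `a`-`b` paths in the complete DAG on `{s,...,N}`. -/
def pathLens (s N a b m : ℕ) (c : ℕ → ℕ → ℝ) : Set ℝ :=
  {x | ∃ v, IsPath s N a b m v ∧ pathLen c m v = x}

/-- The set of link counts of shortest `s`-`n` paths in `G(lam)`
    (the graph with `lam` subtracted from every edge length). -/
def DSet (s N n : ℕ) (c : ℕ → ℕ → ℝ) (lam : ℝ) : Set ℕ :=
  {m | ∃ v, IsPath s N s n m v ∧
    ∀ m' w, IsPath s N s n m' w →
      pathLen c m v - m * lam ≤ pathLen c m' w - m' * lam}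

/-- The set of lengths of all `s`-`n` paths (any number of links). -/
def allLens (s N n : ℕ) (c : ℕ → ℕ → ℝ) : Set ℝ :=
  {x | ∃ m v, IsPath s N s n m v ∧ pathLen c m v = x}

variable {s N : ℕ} {c : ℕ → ℕ → ℝ}

lemma Nat.exists_step_of_zero_of_not {P : ℕ → Prop} {n : ℕ} (h₀ : P 0) (hn : ¬ P n) :
    ∃ j < n, P j ∧ ¬ P (j + 1) := by
  induction n with
  | zero => exact absurd h₀ hn
  | succ n ih =>
    by_cases h : P n
    · exact ⟨n, n.lt_succ_self, h, hn⟩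
    · obtain ⟨j, hj, hPj⟩ := ih h
      exact ⟨j, by omega, hPj⟩

/-- Follow `v` up to index `i`, then continue along `w` from index `j + 1` on. -/
def splice (v : ℕ → ℕ) (i : ℕ) (w : ℕ → ℕ) (j : ℕ) : ℕ → ℕ :=
  fun t => if t ≤ i then v t else w (t - i + j)

namespace IsPath

variable {a b a' b' m p q i j : ℕ} {v w : ℕ → ℕ}

lemma strictMonoOn (hv : IsPath s N a b m v) : StrictMonoOn v (Set.Iic m) :=
  strictMonoOn_Iic_of_lt_succ fun k hk => by simpa using hv.2.2.1 k hk

lemma mem_Icc (hv : IsPath s N a b m v) {k : ℕ} (hk : k ≤ m) : v k ∈ Set.Icc s N := by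
  have h0k := hv.strictMonoOn.monotoneOn (Set.mem_Iic.2 (Nat.zero_le m)) (Set.mem_Iic.2 hk)
    (Nat.zero_le k)
  have hkm := hv.strictMonoOn.monotoneOn (Set.mem_Iic.2 hk) (Set.mem_Iic.2 le_rfl) hk
  obtain ⟨h₀, hm, -, hs, hN⟩ := hv
  exact ⟨by omega, by omega⟩

lemma eq_of_le_apply (hv : IsPath s N a b m v) {k : ℕ} (hk : k ≤ m) (h : b ≤ v k) : k = m := by
  by_contra hne
  have := hv.strictMonoOn (Set.mem_Iic.2 hk) (Set.mem_Iic.2 le_rfl) (lt_of_le_of_ne hk hne)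
  have := hv.2.1
  omega

lemma splice (hv : IsPath s N a b p v) (hw : IsPath s N a' b' q w) (hi : i < p) (hj : j < q)
    (hlt : v i < w (j + 1)) : IsPath s N a b' (i + (q - j)) (splice v i w j) := by
  refine ⟨by simp [_root_.splice, hv.1], ?_, ?_, hv.2.2.2.1, hw.2.2.2.2⟩
  · simp only [_root_.splice, if_neg (show ¬ i + (q - j) ≤ i by omega)]
    rw [show i + (q - j) - i + j = q by omega]
    exact hw.2.1
  · intro t ht
    rcases lt_trichotomy t i with h | rfl | h
    · simp only [_root_.splice, if_pos h.le, if_pos (show t + 1 ≤ i by omega)]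
      exact hv.2.2.1 t (by omega)
    · simp only [_root_.splice, if_pos le_rfl, if_neg (show ¬ t + 1 ≤ t by omega)]
      rwa [show t + 1 - t + j = j + 1 by omega]
    · simp only [_root_.splice, if_neg (show ¬ t ≤ i by omega),
        if_neg (show ¬ t + 1 ≤ i by omega)]
      rw [show t + 1 - i + j = t - i + j + 1 by omega]
      exact hw.2.2.1 _ (by omega)

end IsPath

lemma exists_crossing {b b' p q d : ℕ} {u w : ℕ → ℕ} (hu : IsPath s N s b p u)
    (hw : IsPath s N s b' q w) (hd : d + p ≤ q) (hlt : w (d + p) < b) :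
    ∃ j < p, u j ≤ w (d + j) ∧ w (d + j + 1) < u (j + 1) := by
  have h₀ : u 0 ≤ w (d + 0) := hu.1 ▸ (hw.mem_Icc (by omega)).1
  have hp : ¬ u p ≤ w (d + p) := not_le.2 (hu.2.1 ▸ hlt)
  obtain ⟨j, hj, hle, hlt⟩ := Nat.exists_step_of_zero_of_not (P := fun i => u i ≤ w (d + i)) h₀ hp
  exact ⟨j, hj, hle, not_le.1 hlt⟩

lemma pathLen_congr {m : ℕ} {v v' : ℕ → ℕ} (h : ∀ t ≤ m, v t = v' t) :
    pathLen c m v = pathLen c m v' :=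
  Finset.sum_congr rfl fun t ht => by
    rw [Finset.mem_range] at ht
    rw [h t ht.le, h (t + 1) ht]

lemma pathLen_add_one_add (i r : ℕ) (v : ℕ → ℕ) :
    pathLen c (i + 1 + r) v =
      pathLen c i v + c (v i) (v (i + 1)) + pathLen c r (fun t => v (i + 1 + t)) := by
  rw [pathLen, Finset.sum_range_add, Finset.sum_range_succ]
  rfl

lemma pathLen_splice (v w : ℕ → ℕ) (i j r : ℕ) :
    pathLen c (i + 1 + r) (splice v i w j) =
      pathLen c i v + c (v i) (w (j + 1)) + pathLen c r (fun t => w (j + 1 + t)) := by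
  rw [pathLen_add_one_add]
  congr 2
  · exact pathLen_congr fun t ht => if_pos ht
  · simp only [splice, if_pos le_rfl, if_neg (show ¬ i + 1 ≤ i by omega)]
    rw [show i + 1 - i + j = j + 1 by omega]
  · funext t
    simp only [splice, if_neg (show ¬ i + 1 + t ≤ i by omega)]
    rw [show i + 1 + t - i + j = j + 1 + t by omega]

lemma pathLen_splice_add_pathLen_splice_le (hc : IsMonge s N c) {a b a' b' p q i j : ℕ}
    {v w : ℕ → ℕ} (hv : IsPath s N a b p v) (hw : IsPath s N a' b' q w) (hi : i < p) (hj : j < q)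
    (hle : v i ≤ w j) (hlt : w (j + 1) < v (i + 1)) :
    pathLen c (j + (p - i)) (splice w j v i) + pathLen c (i + (q - j)) (splice v i w j) ≤
      pathLen c p v + pathLen c q w := by
  have hcross : c (v i) (w (j + 1)) + c (w j) (v (i + 1)) ≤
      c (v i) (v (i + 1)) + c (w j) (w (j + 1)) := by
    rcases hle.lt_or_eq with hlt' | heq
    · exact hc _ _ _ _ (hv.mem_Icc hi.le).1 hlt'
        (hw.strictMonoOn (Set.mem_Iic.2 hj.le) (Set.mem_Iic.2 hj) (j.lt_succ_self)) hlt
        (hv.mem_Icc hi).2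
    · rw [heq, add_comm]
  obtain ⟨r, rfl⟩ : ∃ r, p = i + 1 + r := ⟨p - (i + 1), by omega⟩
  obtain ⟨r', rfl⟩ : ∃ r', q = j + 1 + r' := ⟨q - (j + 1), by omega⟩
  rw [show j + (i + 1 + r - i) = j + 1 + r by omega, show i + (j + 1 + r' - j) = i + 1 + r' by omega,
    pathLen_splice, pathLen_splice, pathLen_add_one_add i, pathLen_add_one_add j]
  linarith

/-- The four-point inequality for the minimum lengths `f(m,n)` of `m`-link
`s`-`n` paths; in particular `f` is submodular on its lattice. -/
theorem stmt5 (s N : ℕ) (c : ℕ → ℕ → ℝ) (hc : IsMonge s N c)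
    (f : ℕ → ℕ → ℝ)
    (hf : ∀ k j, 1 ≤ k → s + k ≤ j → j ≤ N → IsLeast (pathLens s N s j k c) (f k j)) :
    ∀ n₁ n₂ m₁ m₂ m, s < n₂ → n₂ ≤ n₁ → n₁ ≤ N → 1 ≤ m₁ → m₁ ≤ m₂ → s + m₂ ≤ n₂ →
      m₁ ≤ m → m ≤ m₂ →
      f m n₁ + f (m₁ + m₂ - m) n₂ ≤ f m₁ n₁ + f m₂ n₂ := by
  intro n₁ n₂ m₁ m₂ m hsn₂ hn₂n₁ hn₁N hm₁ hm₁m₂ hm₂n₂ hm₁m hmm₂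
  obtain ⟨d, rfl⟩ : ∃ d, m = d + m₁ := ⟨m - m₁, by omega⟩
  obtain ⟨⟨u, hu, hu_len⟩, -⟩ := hf m₁ n₁ hm₁ (by omega) hn₁N
  obtain ⟨⟨w, hw, hw_len⟩, -⟩ := hf m₂ n₂ (by omega) hm₂n₂ (by omega)
  by_cases hdeg : n₁ ≤ w (d + m₁)
  · have hm : d + m₁ = m₂ := hw.eq_of_le_apply hmm₂ (by omega)
    have hn : n₁ = n₂ := by have := hw.2.1; rw [hm] at hdeg; omega
    rw [hm, hn, show m₁ + m₂ - m₂ = m₁ by omega, add_comm]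
  obtain ⟨j, hj, hle, hlt⟩ := exists_crossing hu hw hmm₂ (not_le.1 hdeg)
  have hw_step : w (d + j) < w (d + j + 1) := hw.2.2.1 _ (by omega)
  have hA := hw.splice hu (i := d + j) (by omega) hj (hw_step.trans hlt)
  have hB := hu.splice hw (i := j) (j := d + j) hj (by omega) (hle.trans_lt hw_step)
  have hexch := pathLen_splice_add_pathLen_splice_le hc hu hw hj (j := d + j) (by omega) hle hlt
  have hlinks₁ : d + j + (m₁ - j) = d + m₁ := by omega
  have hlinks₂ : j + (m₂ - (d + j)) = m₁ + m₂ - (d + m₁) := by omega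
  rw [hlinks₁] at hA
  rw [hlinks₂] at hB
  rw [hlinks₁, hlinks₂] at hexch
  calc f (d + m₁) n₁ + f (m₁ + m₂ - (d + m₁)) n₂
      ≤ pathLen c (d + m₁) (splice w (d + j) u j) +
          pathLen c (m₁ + m₂ - (d + m₁)) (splice u j w (d + j)) :=
        add_le_add ((hf _ _ (by omega) (by omega) hn₁N).2 ⟨_, hA, rfl⟩)
          ((hf _ _ (by omega) (by omega) (by omega)).2 ⟨_, hB, rfl⟩)
    _ ≤ f m₁ n₁ + f m₂ n₂ := hu_len ▸ hw_len ▸ hexch
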